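/- arXiv:2510.04751 — 3 statements merged into one kernel-verified Lean document; each statement's English description precedes it below -/
import Mathlib

section
/- Let H : ℋ → ℋ* be a bounded symmetric bilinear form on a Hilbert space ℋ that is coercive: H[v,v] ≥ c₀‖v‖² for all v ∈ ℋ with c₀ > 0. Let ℰ ∈ C²(ℋ) with δ²ℰ(ū) = H at a critical point ū (δℰ(ū) = 0), and suppose δ²ℰ is Lipschitz in a neighborhood of ū. Then for any closed subspace W ⊆ ℋ with dist(ū, ū₀ + W) sufficiently small (for a given anchor ū₀), there exists a locally unique critical point ū_W ∈ ū₀ + W of ℰ restricted to ū₀ + W, and ‖ū - ū_W‖ ≤ C inf_{w ∈ W} ‖ū - ū₀ - w‖ for a constant C depending only on c₀ and the Lipschitz constant. -/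
/-!
On the affine space `u₀ + W` the Galerkin residual `w ↦ δℰ(u₀ + w)|_W` is, on the ball of
radius `ρ` around `ū`, approximated by the restricted Hessian `B|_W` up to an error `L ρ`
(mean value inequality applied to the Lipschitz bound on `δ²ℰ`). Coercivity makes `B|_W`
invertible (Lax–Milgram) with inverse of norm at most `1 / c₀`, so the quantitative inverse
function theorem, started at the best approximation `u₀ + P_W (ū - u₀)` of `ū`, where the
residual is `O(dist(ū, u₀ + W))`, produces a Galerkin critical point at distance
`O(dist(ū, u₀ + W))`. Two Galerkin critical points in a ball where `L ρ < c₀` coincide, since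
coercivity dominates the linearisation error in the direction of their difference.
-/

open Metric
open scoped NNReal

theorem Submodule.norm_sub_starProjection_eq_infDist {E : Type*} [NormedAddCommGroup E]
    [InnerProductSpace ℝ E] (K : Submodule ℝ E) [K.HasOrthogonalProjection] (v : E) :
    ‖v - K.starProjection v‖ = infDist v K := by
  rw [Submodule.starProjection_minimal, infDist_eq_iInf]
  simp [dist_eq_norm]

section ApproximatesLinearOn

variable {E F : Type*} [NormedAddCommGroup E] [NormedSpace ℝ E] [NormedAddCommGroup F]
  [NormedSpace ℝ F]

theorem approximatesLinearOn_closedBall_of_norm_fderiv_sub_le {f : E → F}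
    (hf : Differentiable ℝ f) {a : E} {L : ℝ≥0}
    (hL : ∀ x, ‖fderiv ℝ f x - fderiv ℝ f a‖ ≤ L * ‖x - a‖) (ρ : ℝ≥0) :
    ApproximatesLinearOn f (fderiv ℝ f a) (closedBall a ρ) (L * ρ) := by
  intro x hx y hy
  refine (convex_closedBall a ρ).norm_image_sub_le_of_norm_fderiv_le' (fun z _ => hf z)
    (fun z hz => ?_) hy hx
  calc ‖fderiv ℝ f z - fderiv ℝ f a‖ ≤ L * ‖z - a‖ := hL z
    _ ≤ L * ρ := by gcongr; exact mem_closedBall_iff_norm.mp hz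
    _ = ((L * ρ : ℝ≥0) : ℝ) := by push_cast; rfl

theorem ApproximatesLinearOn.norm_sub_le {f : E → F} {f' : E →L[ℝ] F} {s : Set E} {c : ℝ≥0}
    (hf : ApproximatesLinearOn f f' s c) {x y : E} (hx : x ∈ s) (hy : y ∈ s) :
    ‖f x - f y‖ ≤ (‖f'‖ + c) * ‖x - y‖ := by
  have := hf.lipschitz.dist_le_mul ⟨x, hx⟩ ⟨y, hy⟩
  rwa [Subtype.dist_eq, dist_eq_norm, dist_eq_norm] at this

theorem ApproximatesLinearOn.comp_linearIsometry {W : Type*} [NormedAddCommGroup W]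
    [NormedSpace ℝ W] {g : E → E →L[ℝ] F} {B : E →L[ℝ] E →L[ℝ] F} {s : Set E} {c : ℝ≥0}
    (hg : ApproximatesLinearOn g B s c) (ι : W →ₗᵢ[ℝ] E) (p : E) :
    ApproximatesLinearOn (fun w => (g (p + ι w)).comp ι.toContinuousLinearMap)
      (B.bilinearComp ι.toContinuousLinearMap ι.toContinuousLinearMap)
      {w | p + ι w ∈ s} c := by
  intro x hx y hy
  have hxy : (p + ι x) - (p + ι y) = ι (x - y) := by rw [map_sub]; abel
  calc ‖(g (p + ι x)).comp ι.toContinuousLinearMap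
          - (g (p + ι y)).comp ι.toContinuousLinearMap
          - B.bilinearComp ι.toContinuousLinearMap ι.toContinuousLinearMap (x - y)‖
      = ‖(g (p + ι x) - g (p + ι y) - B ((p + ι x) - (p + ι y))).comp
          ι.toContinuousLinearMap‖ := by
        rw [hxy]; rfl
    _ ≤ ‖g (p + ι x) - g (p + ι y) - B ((p + ι x) - (p + ι y))‖ :=
        (ContinuousLinearMap.opNorm_comp_le _ _).trans
          (mul_le_of_le_one_right (norm_nonneg _) ι.norm_toContinuousLinearMap_le)
    _ ≤ c * ‖(p + ι x) - (p + ι y)‖ := hg _ hx _ hy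
    _ = c * ‖x - y‖ := by rw [hxy, ι.norm_map]

end ApproximatesLinearOn

section Coercive

theorem ContinuousLinearMap.mul_norm_le_norm_apply_of_coercive {E : Type*}
    [NormedAddCommGroup E] [NormedSpace ℝ E] {B : E →L[ℝ] E →L[ℝ] ℝ} {c : ℝ}
    (hB : ∀ v, c * ‖v‖ ^ 2 ≤ B v v) (v : E) : c * ‖v‖ ≤ ‖B v‖ := by
  rcases (norm_nonneg v).eq_or_lt with hv | hv
  · simp [← hv]
  refine le_of_mul_le_mul_right ?_ hv
  calc c * ‖v‖ * ‖v‖ = c * ‖v‖ ^ 2 := by ring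
    _ ≤ B v v := hB v
    _ ≤ ‖B v‖ * ‖v‖ := (le_abs_self _).trans ((B v).le_opNorm v)

variable {V : Type*} [NormedAddCommGroup V] [InnerProductSpace ℝ V] [CompleteSpace V]

theorem ContinuousLinearMap.surjective_of_coercive {B : V →L[ℝ] V →L[ℝ] ℝ} {c : ℝ} (hc : 0 < c)
    (hB : ∀ v, c * ‖v‖ ^ 2 ≤ B v v) : Function.Surjective B := by
  have coercive : IsCoercive B := ⟨c, hc, fun v => by simpa [sq, mul_assoc] using hB v⟩
  intro f
  refine ⟨coercive.continuousLinearEquivOfBilin.symm ((InnerProductSpace.toDual ℝ V).symm f), ?_⟩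
  ext w
  rw [← coercive.continuousLinearEquivOfBilin_apply, ContinuousLinearEquiv.apply_symm_apply,
    InnerProductSpace.toDual_symm_apply]

noncomputable def ContinuousLinearMap.nonlinearRightInverseOfCoercive
    (B : V →L[ℝ] V →L[ℝ] ℝ) {c : ℝ≥0} (hc : 0 < c) (hB : ∀ v, c * ‖v‖ ^ 2 ≤ B v v) :
    B.NonlinearRightInverse where
  toFun f := (surjective_of_coercive hc hB f).choose
  nnnorm := c⁻¹
  bound' f := by
    rw [NNReal.coe_inv, ← div_eq_inv_mul, le_div_iff₀' (by exact_mod_cast hc)]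
    simpa [(surjective_of_coercive hc hB f).choose_spec] using
      mul_norm_le_norm_apply_of_coercive hB (surjective_of_coercive hc hB f).choose
  right_inv' f := (surjective_of_coercive hc hB f).choose_spec

end Coercive

section Galerkin

variable {V : Type*} [NormedAddCommGroup V] [InnerProductSpace ℝ V]
  {g : V → V →L[ℝ] ℝ} {B : V →L[ℝ] V →L[ℝ] ℝ} {s : Set V} {c : ℝ≥0}

theorem ApproximatesLinearOn.exists_galerkin_zero {c0 : ℝ≥0} (hc0 : 0 < c0)
    (hB : ∀ v, c0 * ‖v‖ ^ 2 ≤ B v v) (hg : ApproximatesLinearOn g B s c)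
    {W : Type*} [NormedAddCommGroup W] [InnerProductSpace ℝ W] [CompleteSpace W]
    (ι : W →ₗᵢ[ℝ] V) {p : V} {r : ℝ} (hr : 0 ≤ r) (hs : closedBall p r ⊆ s)
    (hgp : ‖g p‖ ≤ (c0 - c) * r) :
    ∃ w, ‖w‖ ≤ r ∧ ∀ v, g (p + ι w) (ι v) = 0 := by
  let R := ContinuousLinearMap.nonlinearRightInverseOfCoercive
    (B.bilinearComp ι.toContinuousLinearMap ι.toContinuousLinearMap) hc0
    fun v => by simpa using hB (ι v)
  have hgW := (hg.comp_linearIsometry ι p).mono_set fun w (hw : w ∈ closedBall 0 r) =>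
    show p + ι w ∈ s from hs (by simpa [dist_eq_norm] using hw)
  have hsurj := hgW.surjOn_closedBall_of_nonlinearRightInverse R hr subset_rfl
  obtain ⟨w, hw, hw0⟩ := @hsurj 0 <| by
    rw [mem_closedBall, dist_zero_left]
    calc ‖(g (p + ι 0)).comp ι.toContinuousLinearMap‖ ≤ ‖g p‖ := by
          simpa using (g p).opNorm_comp_le ι.toContinuousLinearMap |>.trans
            (mul_le_of_le_one_right (norm_nonneg _) ι.norm_toContinuousLinearMap_le)
      _ ≤ _ := by simpa [R, ContinuousLinearMap.nonlinearRightInverseOfCoercive] using hgp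
  exact ⟨w, by simpa using hw, fun v => by simpa using DFunLike.congr_fun hw0 v⟩

theorem ApproximatesLinearOn.eq_of_galerkin_zero {c0 : ℝ} (hB : ∀ v, c0 * ‖v‖ ^ 2 ≤ B v v)
    (hg : ApproximatesLinearOn g B s c) (hc : c < c0) (W : Submodule ℝ V) {u₁ u₂ : V}
    (hu₁ : u₁ ∈ s) (hu₂ : u₂ ∈ s) (hW : u₁ - u₂ ∈ W) (h₁ : ∀ w ∈ W, g u₁ w = 0)
    (h₂ : ∀ w ∈ W, g u₂ w = 0) : u₁ = u₂ := by
  set v := u₁ - u₂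
  have hBv : B v v = -(g u₁ - g u₂ - B v) v := by simp [h₁ v hW, h₂ v hW]
  have hv : c0 * ‖v‖ ^ 2 ≤ c * ‖v‖ ^ 2 :=
    calc c0 * ‖v‖ ^ 2 ≤ B v v := hB v
      _ ≤ ‖(g u₁ - g u₂ - B v) v‖ := hBv ▸ neg_le_abs _
      _ ≤ ‖g u₁ - g u₂ - B v‖ * ‖v‖ := ContinuousLinearMap.le_opNorm _ _
      _ ≤ c * ‖v‖ * ‖v‖ := by gcongr; exact hg _ hu₁ _ hu₂
      _ = c * ‖v‖ ^ 2 := by ring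
  have : ‖v‖ ^ 2 = 0 := by nlinarith [sq_nonneg ‖v‖]
  simpa [v, sub_eq_zero] using this

/-- `C` is the least constant for which, once `L ρ ≤ c₀ / 2`, the residual bound
`(‖B‖ + c₀ / 2) d` at the best approximation is at most the radius `c₀ / 2 * (C - 1) d` of the
residuals reached from the ball of radius `(C - 1) d` by the inverse function theorem. -/
theorem exists_galerkin_zero_near {ubar : V} {c0 L : ℝ≥0} (hc0 : 0 < c0)
    (hB : ∀ v, c0 * ‖v‖ ^ 2 ≤ B v v) (hg0 : g ubar = 0)
    (hg : ∀ ρ : ℝ≥0, ApproximatesLinearOn g B (closedBall ubar ρ) (L * ρ)) {C : ℝ}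
    (hC : c0 * C = 2 * (‖B‖ + c0)) (W : Submodule ℝ V) [CompleteSpace W] (u0 : V)
    (hd : 2 * L * (C * infDist (ubar - u0) W) ≤ c0) :
    ∃ uW, uW - u0 ∈ W ∧ (∀ w ∈ W, g uW w = 0) ∧ ‖ubar - uW‖ ≤ C * infDist (ubar - u0) W := by
  set d := infDist (ubar - u0) W
  have hd0 : 0 ≤ d := infDist_nonneg
  have hC2 : 2 ≤ C := by nlinarith [norm_nonneg B]
  set ρ : ℝ≥0 := ⟨C * d, by positivity⟩
  have hdρ : d ≤ ρ := show d ≤ C * d by nlinarith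
  set p := u0 + W.starProjection (ubar - u0)
  have hp : ‖ubar - p‖ = d := by
    simpa [p, sub_add_eq_sub_sub] using W.norm_sub_starProjection_eq_infDist (ubar - u0)
  have hpρ : p ∈ closedBall ubar ρ := by rwa [mem_closedBall_iff_norm', hp]
  have hgp : ‖g p‖ ≤ (c0 - L * ρ) * (ρ - d) := by
    have := (hg ρ).norm_sub_le hpρ (mem_closedBall_self ρ.2)
    rw [hg0, sub_zero, norm_sub_rev, hp] at this
    refine this.trans ?_
    change (‖B‖ + L * (C * d)) * d ≤ (c0 - L * (C * d)) * (C * d - d)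
    nlinarith [mul_nonneg (mul_nonneg hd0 (by positivity : (0 : ℝ) ≤ C))
      (by linarith : 0 ≤ (c0 : ℝ) - 2 * L * (C * d))]
  obtain ⟨w, hw, hcrit⟩ := (hg ρ).exists_galerkin_zero hc0 hB W.subtypeₗᵢ (sub_nonneg.2 hdρ)
    (closedBall_subset_closedBall' (by rw [dist_eq_norm, norm_sub_rev, hp, sub_add_cancel]))
    hgp
  refine ⟨p + w, ?_, fun v hv => hcrit ⟨v, hv⟩, ?_⟩
  · rw [add_sub_right_comm, add_sub_cancel_left]
    exact W.add_mem (W.starProjection_apply_mem _) w.2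
  calc ‖ubar - (p + w)‖ ≤ ‖ubar - p‖ + ‖(w : V)‖ := by
        rw [← sub_sub]; exact norm_sub_le _ _
    _ ≤ d + (ρ - d) := by rw [hp]; gcongr; exact hw
    _ = C * d := by rw [add_sub_cancel]; rfl

end Galerkin

theorem stmt_4_general {H : Type*} [NormedAddCommGroup H] [InnerProductSpace ℝ H]
    [CompleteSpace H] (E : H → ℝ) (B : H →L[ℝ] H →L[ℝ] ℝ) (c0 L : ℝ)
    (hc0 : 0 < c0) (hLpos : 0 < L) (ubar : H)
    (hE : ContDiff ℝ 2 E)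
    (hcoer : ∀ v : H, c0 * ‖v‖ ^ 2 ≤ B v v)
    (hcrit : fderiv ℝ E ubar = 0)
    (hhess : fderiv ℝ (fun x => fderiv ℝ E x) ubar = B)
    (hLip : ∀ x y : H,
      ‖fderiv ℝ (fun z => fderiv ℝ E z) x - fderiv ℝ (fun z => fderiv ℝ E z) y‖
        ≤ L * ‖x - y‖) :
    ∃ δ > 0, ∃ C > 0, ∀ W : Submodule ℝ H, IsClosed (W : Set H) → ∀ u0 : H,
      Metric.infDist (ubar - u0) (W : Set H) < δ →
      ∃ uW : H, uW - u0 ∈ W ∧ (∀ w ∈ W, fderiv ℝ E uW w = 0) ∧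
        (∀ u' : H, u' - u0 ∈ W → ‖u' - uW‖ < δ →
          (∀ w ∈ W, fderiv ℝ E u' w = 0) → u' = uW) ∧
        ‖ubar - uW‖ ≤ C * Metric.infDist (ubar - u0) (W : Set H) := by
  lift c0 to ℝ≥0 using hc0.le
  lift L to ℝ≥0 using hLpos.le
  have hg : Differentiable ℝ (fderiv ℝ E) :=
    (hE.fderiv_right (by norm_num : (1 : WithTop ℕ∞) + 1 ≤ 2)).differentiable one_ne_zero
  have happrox (ρ : ℝ≥0) : ApproximatesLinearOn (fderiv ℝ E) B (closedBall ubar ρ) (L * ρ) :=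
    hhess ▸ approximatesLinearOn_closedBall_of_norm_fderiv_sub_le hg (fun x => hLip x ubar) ρ
  set C : ℝ := 2 * (‖B‖ + c0) / c0 with hC
  have hC2 : 2 ≤ C := by rw [hC, le_div_iff₀ hc0]; linarith [norm_nonneg B]
  set δ : ℝ := c0 / (2 * L * C)
  have hδ : 0 < δ := by positivity
  have hLCδ : 2 * L * C * δ = c0 := mul_div_cancel₀ _ (by positivity)
  refine ⟨δ, hδ, C, by positivity, fun W hW u0 hd => ?_⟩
  have : CompleteSpace W := hW.completeSpace_coe
  set d := infDist (ubar - u0) W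
  have hLCd : 2 * L * (C * d) < c0 := by
    rw [← hLCδ, ← mul_assoc]; gcongr
  obtain ⟨uW, huW, hcritW, hest⟩ := exists_galerkin_zero_near hc0 hcoer hcrit happrox
    (by rw [hC, mul_div_cancel₀ _ hc0.ne']) W u0 hLCd.le
  refine ⟨uW, huW, hcritW, fun u' hu' hclose hcrit' => ?_, hest⟩
  set R : ℝ≥0 := ⟨C * d + δ, by have := infDist_nonneg (x := ubar - u0) (s := W); positivity⟩
  have hLR : L * R < c0 := by
    change L * (C * d + δ) < (c0 : ℝ)
    nlinarith [mul_le_mul_of_nonneg_left hC2 (by positivity : (0 : ℝ) ≤ L * δ)]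
  have huWR : ‖ubar - uW‖ ≤ R := hest.trans (le_add_of_nonneg_right hδ.le)
  have hu'R : ‖ubar - u'‖ ≤ R :=
    (norm_sub_le_norm_sub_add_norm_sub ubar uW u').trans
      (add_le_add hest (by rw [norm_sub_rev]; exact hclose.le))
  exact (happrox R).eq_of_galerkin_zero hcoer hLR W (mem_closedBall_iff_norm'.2 hu'R)
    (mem_closedBall_iff_norm'.2 huWR) (by simpa using W.sub_mem hu' huW) hcrit' hcritW

/-- Abstract quasi-best-approximation: if ℰ ∈ C²(ℋ) has a critical point ū
with coercive Hessian B (c₀-coercivity) and locally Lipschitz second derivative (constant L),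
then for every closed subspace W and anchor ū₀ with dist(ū, ū₀ + W) sufficiently small there
is a locally unique critical point ū_W of ℰ on ū₀ + W with
‖ū - ū_W‖ ≤ C inf_{w∈W} ‖ū - ū₀ - w‖, C depending only on c₀ and L. -/
theorem stmt_4 {H : Type*} [NormedAddCommGroup H] [InnerProductSpace ℝ H]
    [CompleteSpace H] (E : H → ℝ) (B : H →L[ℝ] H →L[ℝ] ℝ) (c0 L : ℝ)
    (hc0 : 0 < c0) (hLpos : 0 < L) (ubar : H)
    (hE : ContDiff ℝ 2 E)
    (hsymm : ∀ v w : H, B v w = B w v)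
    (hcoer : ∀ v : H, c0 * ‖v‖ ^ 2 ≤ B v v)
    (hcrit : fderiv ℝ E ubar = 0)
    (hhess : fderiv ℝ (fun x => fderiv ℝ E x) ubar = B)
    (hLip : ∀ x y : H,
      ‖fderiv ℝ (fun z => fderiv ℝ E z) x - fderiv ℝ (fun z => fderiv ℝ E z) y‖
        ≤ L * ‖x - y‖) :
    ∃ δ > 0, ∃ C > 0, ∀ W : Submodule ℝ H, IsClosed (W : Set H) → ∀ u0 : H,
      Metric.infDist (ubar - u0) (W : Set H) < δ →
      ∃ uW : H, uW - u0 ∈ W ∧ (∀ w ∈ W, fderiv ℝ E uW w = 0) ∧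
        (∀ u' : H, u' - u0 ∈ W → ‖u' - uW‖ < δ →
          (∀ w ∈ W, fderiv ℝ E u' w = 0) → u' = uW) ∧
        ‖ubar - uW‖ ≤ C * Metric.infDist (ubar - u0) (W : Set H) :=
  stmt_4_general E B c0 L hc0 hLpos ubar hE hcoer hcrit hhess hLip
end

section
/- Let v : ℤ² → ℝ satisfy the decay bound |v(ℓ) - v(ℓ')| ≤ C |ℓ|^{-1-p} log^{p+1}(|ℓ|) for all nearest neighbors ℓ, ℓ' with |ℓ| ≥ 2, where p ≥ 0 is an integer. Define the truncation error E(R) := ( Σ_{|ℓ| > R} max over nearest-neighbor differences |v(ℓ+ρ) - v(ℓ)|² )^{1/2}. Then there is a constant C' (depending on C and p) such that E(R) ≤ C' R^{-p} log^{p+1}(R) for all R ≥ 2. -/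
/-- Euclidean norm of a point of ℤ². -/
noncomputable def latNorm (ℓ : ℤ × ℤ) : ℝ := Real.sqrt ((ℓ.1 : ℝ) ^ 2 + (ℓ.2 : ℝ) ^ 2)

/-- The nearest neighbour directions in ℤ². -/
def NN : Finset (ℤ × ℤ) := {(1, 0), (-1, 0), (0, 1), (0, -1)}

theorem NN_nonempty : NN.Nonempty := ⟨(1, 0), by simp [NN]⟩

lemma latNorm_nonneg (ℓ : ℤ × ℤ) : 0 ≤ latNorm ℓ := Real.sqrt_nonneg _

lemma abs_fst_le_latNorm (ℓ : ℤ × ℤ) : |(ℓ.1 : ℝ)| ≤ latNorm ℓ := by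
  rw [← Real.sqrt_sq_eq_abs]
  exact Real.sqrt_le_sqrt (by nlinarith [sq_nonneg ((ℓ.2 : ℝ))])

lemma abs_snd_le_latNorm (ℓ : ℤ × ℤ) : |(ℓ.2 : ℝ)| ≤ latNorm ℓ := by
  rw [← Real.sqrt_sq_eq_abs]
  exact Real.sqrt_le_sqrt (by nlinarith [sq_nonneg ((ℓ.1 : ℝ))])

/-- ℓ∞ shell index. -/
def mIdx (ℓ : ℤ × ℤ) : ℕ := max ℓ.1.natAbs ℓ.2.natAbs

lemma mIdx_cast (ℓ : ℤ × ℤ) : (mIdx ℓ : ℝ) = max |(ℓ.1 : ℝ)| |(ℓ.2 : ℝ)| := by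
  unfold mIdx
  push_cast [Nat.cast_natAbs]
  rfl

lemma mIdx_le_latNorm (ℓ : ℤ × ℤ) : (mIdx ℓ : ℝ) ≤ latNorm ℓ := by
  rw [mIdx_cast]
  exact max_le (abs_fst_le_latNorm ℓ) (abs_snd_le_latNorm ℓ)

lemma latNorm_le_two_mIdx (ℓ : ℤ × ℤ) : latNorm ℓ ≤ 2 * (mIdx ℓ : ℝ) := by
  have h1 : |(ℓ.1 : ℝ)| ≤ (mIdx ℓ : ℝ) := by rw [mIdx_cast]; exact le_max_left _ _
  have h2 : |(ℓ.2 : ℝ)| ≤ (mIdx ℓ : ℝ) := by rw [mIdx_cast]; exact le_max_right _ _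
  have hm : (0 : ℝ) ≤ (mIdx ℓ : ℝ) := Nat.cast_nonneg _
  have : latNorm ℓ ≤ Real.sqrt ((2 * (mIdx ℓ : ℝ)) ^ 2) := by
    apply Real.sqrt_le_sqrt
    nlinarith [abs_nonneg ((ℓ.1 : ℝ)), abs_nonneg ((ℓ.2 : ℝ)), sq_abs ((ℓ.1 : ℝ)),
      sq_abs ((ℓ.2 : ℝ))]
  simpa [Real.sqrt_sq (by positivity : (0:ℝ) ≤ 2 * (mIdx ℓ : ℝ))] using this

/-- Key telescoping bound coming from the integral comparison. -/
lemma key_tele {s : ℝ} (hs : 3 ≤ s) {x : ℝ} (hx : 2 ≤ x) :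
    x ^ (1 - s) ≤ (s - 2)⁻¹ * ((x - 1) ^ (2 - s) - x ^ (2 - s)) := by
  have hx0 : (0 : ℝ) < x := by linarith
  have hx1 : (0 : ℝ) < x - 1 := by linarith
  have hnotin : (0 : ℝ) ∉ Set.uIcc (x - 1) x := by
    rw [Set.uIcc_of_le (by linarith)]
    intro h
    exact absurd h.1 (by linarith)
  have hInt : ∫ t in (x-1)..x, t ^ (1 - s) = (x ^ (2-s) - (x-1) ^ (2-s)) / (2 - s) := by
    rw [integral_rpow (Or.inr ⟨by intro h; nlinarith [h], hnotin⟩)]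
    have h21 : (1:ℝ) - s + 1 = 2 - s := by ring
    rw [h21]
  have hIntegrable : IntervalIntegrable (fun t : ℝ => t ^ (1 - s)) MeasureTheory.volume
      (x - 1) x := intervalIntegral.intervalIntegrable_rpow (Or.inr hnotin)
  have hmono : ∫ t in (x-1)..x, (x ^ (1 - s)) ≤ ∫ t in (x-1)..x, t ^ (1 - s) := by
    apply intervalIntegral.integral_mono_on (by linarith) intervalIntegrable_const hIntegrable
    intro t ht
    exact Real.rpow_le_rpow_of_nonpos (by linarith [ht.1]) ht.2 (by linarith)
  rw [intervalIntegral.integral_const, smul_eq_mul] at hmono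
  have h2s : (2 : ℝ) - s ≠ 0 := by linarith
  have hs2 : (s : ℝ) - 2 ≠ 0 := by linarith
  have : x ^ (1 - s) ≤ (x ^ (2-s) - (x-1) ^ (2-s)) / (2 - s) := by
    calc x ^ (1 - s) = (x - (x - 1)) * x ^ (1 - s) := by ring_nf
    _ ≤ _ := by rw [← hInt]; exact hmono
  calc x ^ (1 - s) ≤ (x ^ (2-s) - (x-1) ^ (2-s)) / (2 - s) := this
  _ = (s - 2)⁻¹ * ((x - 1) ^ (2 - s) - x ^ (2 - s)) := by field_simp; ring

/-- 1D tail estimate for `n^{1-s}` over `n > R/2`. -/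
lemma tail1D {s R : ℝ} (hs : 3 ≤ s) (hR : 2 ≤ R) :
    Summable (fun n : ℕ => if R / 2 < (n : ℝ) then (n : ℝ) ^ (1 - s) else 0) ∧
      (∑' n : ℕ, if R / 2 < (n : ℝ) then (n : ℝ) ^ (1 - s) else 0)
        ≤ (s - 2)⁻¹ * (R / 4) ^ (2 - s) := by
  set a : ℕ → ℝ := fun n => if R / 2 < (n : ℝ) then (n : ℝ) ^ (1 - s) else 0 with ha
  have hR2 : (1 : ℝ) ≤ R / 2 := by linarith
  have hfloor1 : 1 ≤ ⌊R / 2⌋₊ := Nat.le_floor (by exact_mod_cast hR2)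
  set N : ℕ := ⌊R / 2⌋₊ + 1 with hN
  have hN2 : 2 ≤ N := by omega
  have hcond : ∀ n : ℕ, (R / 2 < (n : ℝ)) ↔ N ≤ n := by
    intro n
    rw [hN, Nat.succ_le, ← Nat.floor_lt (by linarith)]
  have hanonneg : ∀ n, 0 ≤ a n := by
    intro n; rw [ha]; dsimp only
    split
    · exact Real.rpow_nonneg (Nat.cast_nonneg _) _
    · exact le_refl 0
  have hfloor_ge : R / 4 ≤ (⌊R / 2⌋₊ : ℝ) := by
    by_cases h4 : R ≤ 4
    · have : (1 : ℝ) ≤ (⌊R / 2⌋₊ : ℝ) := by exact_mod_cast hfloor1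
      linarith
    · have := Nat.sub_one_lt_floor (R / 2)
      linarith
  have hkey : ∀ M : ℕ, ∑ n ∈ Finset.range M, a n ≤ (s - 2)⁻¹ * (R / 4) ^ (2 - s) := by
    intro M
    have hd : ∀ n ∈ Finset.range M, a n ≤
        (if N ≤ n then (s - 2)⁻¹ * (((n : ℝ) - 1) ^ (2 - s) - (n : ℝ) ^ (2 - s)) else 0) := by
      intro n _
      rw [ha]; dsimp only
      by_cases h : R / 2 < (n : ℝ)
      · rw [if_pos h, if_pos ((hcond n).mp h)]
        have hn2 : (2 : ℝ) ≤ (n : ℝ) := by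
          have := (hcond n).mp h
          exact_mod_cast le_trans hN2 this
        exact key_tele hs hn2
      · rw [if_neg h, if_neg (fun hc => h ((hcond n).mpr hc))]
    calc ∑ n ∈ Finset.range M, a n
        ≤ ∑ n ∈ Finset.range M,
          (if N ≤ n then (s - 2)⁻¹ * (((n : ℝ) - 1) ^ (2 - s) - (n : ℝ) ^ (2 - s)) else 0) :=
          Finset.sum_le_sum hd
      _ = ∑ n ∈ Finset.Ico N M, (s - 2)⁻¹ * (((n : ℝ) - 1) ^ (2 - s) - (n : ℝ) ^ (2 - s)) := by
          rw [← Finset.sum_filter]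
          apply Finset.sum_congr _ (fun _ _ => rfl)
          ext n
          simp only [Finset.mem_filter, Finset.mem_range, Finset.mem_Ico]
          tauto
      _ = (s - 2)⁻¹ * ∑ n ∈ Finset.Ico N M, (((n : ℝ) - 1) ^ (2 - s) - (n : ℝ) ^ (2 - s)) := by
          rw [Finset.mul_sum]
      _ ≤ (s - 2)⁻¹ * (R / 4) ^ (2 - s) := by
          have h2 : (0:ℝ) < s - 2 := by linarith
          apply mul_le_mul_of_nonneg_left _ (by positivity : (0:ℝ) ≤ (s - 2)⁻¹)
          rw [Finset.sum_Ico_eq_sum_range]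
          have : ∀ k : ℕ, (((N + k : ℕ) : ℝ) - 1) ^ (2 - s) - ((N + k : ℕ) : ℝ) ^ (2 - s)
              = (fun i : ℕ => (((N + i : ℕ) : ℝ) - 1) ^ (2 - s)) k
                - (fun i : ℕ => (((N + i : ℕ) : ℝ) - 1) ^ (2 - s)) (k + 1) := by
            intro k
            dsimp only
            congr 2
            push_cast
            ring
          calc ∑ k ∈ Finset.range (M - N),
                ((((N + k : ℕ) : ℝ) - 1) ^ (2 - s) - ((N + k : ℕ) : ℝ) ^ (2 - s))
              = ∑ k ∈ Finset.range (M - N),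
                ((fun i : ℕ => (((N + i : ℕ) : ℝ) - 1) ^ (2 - s)) k
                - (fun i : ℕ => (((N + i : ℕ) : ℝ) - 1) ^ (2 - s)) (k + 1)) := by
                apply Finset.sum_congr rfl
                intro k _
                exact this k
            _ = (((N + 0 : ℕ) : ℝ) - 1) ^ (2 - s)
                - (((N + (M - N) : ℕ) : ℝ) - 1) ^ (2 - s) := Finset.sum_range_sub' _ _
            _ ≤ (((N : ℕ) : ℝ) - 1) ^ (2 - s) := by
                simp only [Nat.add_zero]
                have : (0:ℝ) ≤ (((N + (M - N) : ℕ) : ℝ) - 1) ^ (2 - s) := by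
                  apply Real.rpow_nonneg
                  have : (1 : ℝ) ≤ ((N + (M - N) : ℕ) : ℝ) := by
                    exact_mod_cast Nat.one_le_iff_ne_zero.mpr (by omega)
                  linarith
                linarith
            _ ≤ (R / 4) ^ (2 - s) := by
                have hbase : ((N : ℕ) : ℝ) - 1 = (⌊R / 2⌋₊ : ℝ) := by
                  rw [hN]; push_cast; ring
                rw [hbase]
                exact Real.rpow_le_rpow_of_nonpos (by linarith) hfloor_ge (by linarith)
  have hsummable : Summable a := summable_of_sum_range_le hanonneg hkey
  exact ⟨hsummable, Summable.tsum_le_of_sum_range_le hsummable hkey⟩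

/-- 2D lattice tail estimate. -/
lemma tail2D {s R : ℝ} (hs : 3 ≤ s) (hR : 2 ≤ R) :
    Summable (fun ℓ : ℤ × ℤ => if R < latNorm ℓ then latNorm ℓ ^ (-s) else 0) ∧
      (∑' ℓ : ℤ × ℤ, if R < latNorm ℓ then latNorm ℓ ^ (-s) else 0)
        ≤ 8 * ((s - 2)⁻¹ * (R / 4) ^ (2 - s)) := by
  obtain ⟨hsum_a, htsum_a⟩ := tail1D hs hR
  set a : ℕ → ℝ := fun n => if R / 2 < (n : ℝ) then (n : ℝ) ^ (1 - s) else 0 with ha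
  set h : ℤ × ℤ → ℝ := fun ℓ => if R < latNorm ℓ then latNorm ℓ ^ (-s) else 0 with hh
  have hanonneg : ∀ n, 0 ≤ a n := by
    intro n; rw [ha]; dsimp only; split
    · exact Real.rpow_nonneg (Nat.cast_nonneg _) _
    · exact le_refl 0
  have hhnonneg : ∀ ℓ, 0 ≤ h ℓ := by
    intro ℓ; rw [hh]; dsimp only; split
    · exact Real.rpow_nonneg (latNorm_nonneg _) _
    · exact le_refl 0
  -- bound on finite sums
  have hFin : ∀ F : Finset (ℤ × ℤ), ∑ ℓ ∈ F, h ℓ ≤ 8 * ((s - 2)⁻¹ * (R / 4) ^ (2 - s)) := by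
    intro F
    have hmaps : ∀ ℓ ∈ F, mIdx ℓ ∈ F.image mIdx := fun ℓ hℓ => Finset.mem_image_of_mem _ hℓ
    rw [← Finset.sum_fiberwise_of_maps_to hmaps h]
    have hfiber : ∀ n ∈ F.image mIdx,
        (∑ ℓ ∈ F.filter (fun ℓ => mIdx ℓ = n), h ℓ) ≤ 8 * a n := by
      intro n _
      have hterm : ∀ ℓ ∈ F.filter (fun ℓ => mIdx ℓ = n), h ℓ ≤
          (if R / 2 < (n : ℝ) then (n : ℝ) ^ (-s) else 0) := by
        intro ℓ hℓ
        have hmn : mIdx ℓ = n := (Finset.mem_filter.mp hℓ).2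
        rw [hh]; dsimp only
        by_cases hcon : R < latNorm ℓ
        · rw [if_pos hcon]
          have h2m : latNorm ℓ ≤ 2 * (n : ℝ) := by rw [← hmn]; exact latNorm_le_two_mIdx ℓ
          have hn2 : R / 2 < (n : ℝ) := by linarith
          rw [if_pos hn2]
          apply Real.rpow_le_rpow_of_nonpos _ _ (by linarith)
          · have : (R / 2 : ℝ) > 0 := by linarith
            exact lt_trans this hn2
          · rw [← hmn]; exact mIdx_le_latNorm ℓ
        · rw [if_neg hcon]
          split
          · exact Real.rpow_nonneg (Nat.cast_nonneg _) _
          · exact le_refl 0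
      calc ∑ ℓ ∈ F.filter (fun ℓ => mIdx ℓ = n), h ℓ
          ≤ (F.filter (fun ℓ => mIdx ℓ = n)).card •
            (if R / 2 < (n : ℝ) then (n : ℝ) ^ (-s) else 0) :=
            Finset.sum_le_card_nsmul _ _ _ hterm
        _ ≤ 8 * a n := by
            by_cases hcn : R / 2 < (n : ℝ)
            · have hn0 : n ≠ 0 := by
                intro h0
                rw [h0] at hcn
                push_cast at hcn
                linarith
              have hcard : (F.filter (fun ℓ => mIdx ℓ = n)).card ≤ 8 * n := by
                have hsub : F.filter (fun ℓ => mIdx ℓ = n) ⊆ (Finset.box n : Finset (ℤ × ℤ)) := by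
                  intro ℓ hℓ
                  rw [Int.mem_box]
                  exact (Finset.mem_filter.mp hℓ).2
                calc (F.filter (fun ℓ => mIdx ℓ = n)).card
                    ≤ (Finset.box n : Finset (ℤ × ℤ)).card := Finset.card_le_card hsub
                  _ = 8 * n := Int.card_box hn0
              rw [if_pos hcn, ha]; dsimp only; rw [if_pos hcn]
              have hn1 : (1 : ℝ) ≤ (n : ℝ) := by
                have : (0:ℝ) < (n:ℝ) := by linarith
                exact_mod_cast Nat.one_le_iff_ne_zero.mpr hn0
              have hns : (0:ℝ) ≤ (n : ℝ) ^ (-s) := Real.rpow_nonneg (by linarith) _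
              calc (F.filter (fun ℓ => mIdx ℓ = n)).card • ((n : ℝ) ^ (-s))
                  = ((F.filter (fun ℓ => mIdx ℓ = n)).card : ℝ) * (n : ℝ) ^ (-s) := by
                    rw [nsmul_eq_mul]
                _ ≤ (8 * n : ℕ) * (n : ℝ) ^ (-s) := by
                    apply mul_le_mul_of_nonneg_right _ hns
                    exact_mod_cast hcard
                _ = 8 * ((n : ℝ) * (n : ℝ) ^ (-s)) := by push_cast; ring
                _ = 8 * (n : ℝ) ^ (1 - s) := by
                    congr 1
                    rw [show (1 : ℝ) - s = 1 + (-s) by ring,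
                      Real.rpow_add (by linarith : (0:ℝ) < (n:ℝ)), Real.rpow_one]
            · rw [if_neg hcn, smul_zero, ha]; dsimp only; rw [if_neg hcn]
              norm_num
    calc ∑ n ∈ F.image mIdx, ∑ ℓ ∈ F.filter (fun ℓ => mIdx ℓ = n), h ℓ
        ≤ ∑ n ∈ F.image mIdx, 8 * a n := Finset.sum_le_sum hfiber
      _ ≤ ∑' n : ℕ, 8 * a n := by
          apply Summable.sum_le_tsum _ (fun n _ => by positivity)
          exact hsum_a.mul_left 8
      _ = 8 * ∑' n : ℕ, a n := by rw [tsum_mul_left]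
      _ ≤ 8 * ((s - 2)⁻¹ * (R / 4) ^ (2 - s)) := by
          apply mul_le_mul_of_nonneg_left htsum_a (by norm_num)
  have hsummable : Summable h := summable_of_sum_le hhnonneg hFin
  exact ⟨hsummable, Summable.tsum_le_of_sum_le hsummable hFin⟩

/-- log comparison lemma. -/
lemma log_compare {R x ε : ℝ} (hR : 2 ≤ R) (hx : R < x) (hε : 0 < ε) :
    Real.log x ≤ (1 + (ε * Real.log 2)⁻¹) * Real.log R * (x / R) ^ ε := by
  have hR0 : (0 : ℝ) < R := by linarith
  have hx0 : (0 : ℝ) < x := by linarith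
  have hy1 : (1 : ℝ) < x / R := (one_lt_div hR0).mpr hx
  have hy0 : (0 : ℝ) < x / R := by linarith
  have hlog2 : (0 : ℝ) < Real.log 2 := Real.log_pos (by norm_num)
  have hlogR : Real.log 2 ≤ Real.log R := Real.log_le_log (by norm_num) hR
  have hlogR0 : (0 : ℝ) < Real.log R := lt_of_lt_of_le hlog2 hlogR
  have hsplit : Real.log x = Real.log R + Real.log (x / R) := by
    rw [Real.log_div (ne_of_gt hx0) (ne_of_gt hR0)]; ring
  have hyε1 : (1 : ℝ) ≤ (x / R) ^ ε := by
    rw [show (1:ℝ) = (x / R) ^ (0:ℝ) by rw [Real.rpow_zero]]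
    exact Real.rpow_le_rpow_of_exponent_le (le_of_lt hy1) (le_of_lt hε)
  have hlogy : Real.log (x / R) ≤ ε⁻¹ * (x / R) ^ ε := by
    have h1 : Real.log ((x / R) ^ ε) = ε * Real.log (x / R) := Real.log_rpow hy0 ε
    have h2 : Real.log ((x / R) ^ ε) ≤ (x / R) ^ ε - 1 :=
      Real.log_le_sub_one_of_pos (Real.rpow_pos_of_pos hy0 ε)
    have h3 : ε * Real.log (x / R) ≤ (x / R) ^ ε := by rw [← h1]; linarith
    rw [inv_mul_eq_div, le_div_iff₀ hε]
    linarith [h3]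
  have hεinv : (0:ℝ) < ε⁻¹ := by positivity
  have key : ε⁻¹ * (x / R) ^ ε ≤ (ε * Real.log 2)⁻¹ * Real.log R * (x / R) ^ ε := by
    rw [mul_inv]
    have h1 : ε⁻¹ ≤ ε⁻¹ * (Real.log 2)⁻¹ * Real.log R := by
      rw [mul_assoc]
      nth_rewrite 1 [show ε⁻¹ = ε⁻¹ * 1 by ring]
      apply mul_le_mul_of_nonneg_left _ (le_of_lt hεinv)
      rw [inv_mul_eq_div, le_div_iff₀ hlog2]
      linarith
    apply mul_le_mul_of_nonneg_right h1 (by linarith)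
  have hlogRterm : Real.log R ≤ Real.log R * (x / R) ^ ε := by
    nth_rewrite 1 [show Real.log R = Real.log R * 1 by ring]
    exact mul_le_mul_of_nonneg_left hyε1 (le_of_lt hlogR0)
  calc Real.log x = Real.log R + Real.log (x / R) := hsplit
    _ ≤ Real.log R * (x / R) ^ ε + (ε * Real.log 2)⁻¹ * Real.log R * (x / R) ^ ε := by
        have := le_trans hlogy key
        linarith
    _ = (1 + (ε * Real.log 2)⁻¹) * Real.log R * (x / R) ^ ε := by ring

/-- If nearest-neighbour differences of v : ℤ × ℤ → ℝ decay like
|ℓ|^{-1-p} log^{p+1}|ℓ|, then the ℓ² tail of the discrete gradient (using the max over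
nearest-neighbour differences) satisfies E(R) ≤ C' R^{-p} log^{p+1}(R) for R ≥ 2. -/
theorem stmt_5 (p : ℕ) (C : ℝ) (hC : 0 < C) (v : ℤ × ℤ → ℝ)
    (hdecay : ∀ ℓ : ℤ × ℤ, ∀ ρ ∈ NN, 2 ≤ latNorm ℓ →
      |v (ℓ + ρ) - v ℓ| ≤ C * latNorm ℓ ^ (-(1 : ℝ) - p) * Real.log (latNorm ℓ) ^ (p + 1)) :
    ∃ C' > 0, ∀ R : ℝ, 2 ≤ R →
      (∑' ℓ : ℤ × ℤ, if R < latNorm ℓ then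
          (NN.sup' NN_nonempty fun ρ => |v (ℓ + ρ) - v ℓ|) ^ 2 else 0) ^ ((1 : ℝ) / 2)
        ≤ C' * R ^ (-(p : ℝ)) * Real.log R ^ (p + 1) := by
  classical
  have hGnonneg : ∀ ℓ : ℤ × ℤ, 0 ≤ NN.sup' NN_nonempty fun ρ => |v (ℓ + ρ) - v ℓ| := by
    intro ℓ
    exact le_trans (abs_nonneg (v (ℓ + ((1,0) : ℤ × ℤ)) - v ℓ))
      (Finset.le_sup' (fun ρ => |v (ℓ + ρ) - v ℓ|) (show ((1,0) : ℤ × ℤ) ∈ NN by simp [NN]))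
  have hG : ∀ ℓ : ℤ × ℤ, 2 ≤ latNorm ℓ →
      (NN.sup' NN_nonempty fun ρ => |v (ℓ + ρ) - v ℓ|)
        ≤ C * latNorm ℓ ^ (-(1 : ℝ) - p) * Real.log (latNorm ℓ) ^ (p + 1) := by
    intro ℓ h2
    exact Finset.sup'_le _ _ (fun ρ hρ => hdecay ℓ ρ hρ h2)
  have hfnonneg : ∀ (R : ℝ) (ℓ : ℤ × ℤ),
      0 ≤ (if R < latNorm ℓ then
        (NN.sup' NN_nonempty fun ρ => |v (ℓ + ρ) - v ℓ|) ^ 2 else 0) := by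
    intro R ℓ
    split
    · exact sq_nonneg _
    · exact le_refl 0
  have hlog2 : (0 : ℝ) < Real.log 2 := Real.log_pos (by norm_num)
  rcases Nat.eq_zero_or_pos p with hp | hp
  · -- trivial case p = 0
    subst hp
    set T : ℝ := ∑' ℓ : ℤ × ℤ, if (2:ℝ) < latNorm ℓ then
        (NN.sup' NN_nonempty fun ρ => |v (ℓ + ρ) - v ℓ|) ^ 2 else 0 with hT
    refine ⟨(Real.sqrt T + 1) / Real.log 2, div_pos (by positivity) hlog2, ?_⟩
    intro R hR
    have hR0 : (0:ℝ) < R := by linarith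
    have hlogR : Real.log 2 ≤ Real.log R := Real.log_le_log (by norm_num) hR
    have hrhs : (Real.sqrt T + 1) / Real.log 2 * R ^ (-((0:ℕ) : ℝ)) * Real.log R ^ (0 + 1)
        = (Real.sqrt T + 1) / Real.log 2 * Real.log R := by
      norm_num
    rw [hrhs]
    by_cases hsum : Summable (fun ℓ : ℤ × ℤ => if (2:ℝ) < latNorm ℓ then
        (NN.sup' NN_nonempty fun ρ => |v (ℓ + ρ) - v ℓ|) ^ 2 else 0)
    · have hle : ∀ ℓ : ℤ × ℤ,
          (if R < latNorm ℓ then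
            (NN.sup' NN_nonempty fun ρ => |v (ℓ + ρ) - v ℓ|) ^ 2 else 0)
          ≤ (if (2:ℝ) < latNorm ℓ then
            (NN.sup' NN_nonempty fun ρ => |v (ℓ + ρ) - v ℓ|) ^ 2 else 0) := by
        intro ℓ
        by_cases h : R < latNorm ℓ
        · rw [if_pos h, if_pos (lt_of_le_of_lt hR h)]
        · rw [if_neg h]
          exact hfnonneg 2 ℓ
      have hsumR : Summable (fun ℓ : ℤ × ℤ => if R < latNorm ℓ then
          (NN.sup' NN_nonempty fun ρ => |v (ℓ + ρ) - v ℓ|) ^ 2 else 0) :=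
        Summable.of_nonneg_of_le (hfnonneg R) hle hsum
      have h1 : (∑' ℓ : ℤ × ℤ, if R < latNorm ℓ then
          (NN.sup' NN_nonempty fun ρ => |v (ℓ + ρ) - v ℓ|) ^ 2 else 0) ≤ T :=
        Summable.tsum_le_tsum hle hsumR hsum
      have h0 : 0 ≤ (∑' ℓ : ℤ × ℤ, if R < latNorm ℓ then
          (NN.sup' NN_nonempty fun ρ => |v (ℓ + ρ) - v ℓ|) ^ 2 else 0) :=
        tsum_nonneg (hfnonneg R)
      calc (∑' ℓ : ℤ × ℤ, if R < latNorm ℓ then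
          (NN.sup' NN_nonempty fun ρ => |v (ℓ + ρ) - v ℓ|) ^ 2 else 0) ^ ((1:ℝ)/2)
          ≤ T ^ ((1:ℝ)/2) := Real.rpow_le_rpow h0 h1 (by norm_num)
        _ = Real.sqrt T := (Real.sqrt_eq_rpow T).symm
        _ ≤ (Real.sqrt T + 1) / Real.log 2 * Real.log R := by
            have h2 : (Real.sqrt T + 1) / Real.log 2 * Real.log 2
                ≤ (Real.sqrt T + 1) / Real.log 2 * Real.log R := by
              apply mul_le_mul_of_nonneg_left hlogR
              positivity
            rw [div_mul_cancel₀ _ (ne_of_gt hlog2)] at h2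
            have := Real.sqrt_nonneg T
            linarith
    · -- non-summable case: the tsum is zero
      have hnot : ¬ Summable (fun ℓ : ℤ × ℤ => if R < latNorm ℓ then
          (NN.sup' NN_nonempty fun ρ => |v (ℓ + ρ) - v ℓ|) ^ 2 else 0) := by
        intro hsumR
        apply hsum
        set e : ℤ × ℤ → ℝ := fun ℓ =>
          (if (2:ℝ) < latNorm ℓ then
            (NN.sup' NN_nonempty fun ρ => |v (ℓ + ρ) - v ℓ|) ^ 2 else 0)
          - (if R < latNorm ℓ then
            (NN.sup' NN_nonempty fun ρ => |v (ℓ + ρ) - v ℓ|) ^ 2 else 0) with hedef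
        have he : Summable e := by
          apply summable_of_ne_finset_zero
            (s := Finset.Icc ((-⌈R⌉, -⌈R⌉) : ℤ × ℤ) ((⌈R⌉, ⌈R⌉) : ℤ × ℤ))
          intro ℓ hm
          have hlat : R < latNorm ℓ := by
            by_contra hle'
            push_neg at hle'
            apply hm
            rw [Finset.mem_Icc]
            have hceil : R ≤ (⌈R⌉ : ℝ) := Int.le_ceil R
            have h1 := abs_fst_le_latNorm ℓ
            have h2 := abs_snd_le_latNorm ℓ
            have ha1 : |(ℓ.1 : ℝ)| ≤ (⌈R⌉ : ℝ) := by linarith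
            have ha2 : |(ℓ.2 : ℝ)| ≤ (⌈R⌉ : ℝ) := by linarith
            rw [abs_le] at ha1 ha2
            constructor <;> rw [Prod.le_def] <;> constructor <;> dsimp only
            · exact_mod_cast ha1.1
            · exact_mod_cast ha2.1
            · exact_mod_cast ha1.2
            · exact_mod_cast ha2.2
          have h2lat : (2:ℝ) < latNorm ℓ := lt_of_le_of_lt hR hlat
          rw [hedef]
          dsimp only
          rw [if_pos hlat, if_pos h2lat, sub_self]
        have heq : (fun ℓ : ℤ × ℤ => if (2:ℝ) < latNorm ℓ then
            (NN.sup' NN_nonempty fun ρ => |v (ℓ + ρ) - v ℓ|) ^ 2 else 0)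
            = (fun ℓ : ℤ × ℤ => (if R < latNorm ℓ then
              (NN.sup' NN_nonempty fun ρ => |v (ℓ + ρ) - v ℓ|) ^ 2 else 0) + e ℓ) := by
          funext ℓ
          rw [hedef]
          ring
        rw [heq]
        exact hsumR.add he
      rw [tsum_eq_zero_of_not_summable hnot, Real.zero_rpow (by norm_num)]
      have h1 : (0:ℝ) ≤ (Real.sqrt T + 1) / Real.log 2 := by positivity
      exact mul_nonneg h1 (by linarith)
  · -- main case p ≥ 1
    have hp1 : (1:ℝ) ≤ (p:ℝ) := by exact_mod_cast hp
    set s : ℝ := 3/2 + 2*(p:ℝ) with hsdef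
    have hs : (3:ℝ) ≤ s := by rw [hsdef]; linarith
    have hs2 : (0:ℝ) < s - 2 := by linarith
    set ε : ℝ := ((4:ℝ)*((p:ℝ)+1))⁻¹ with hεdef
    have hε : (0:ℝ) < ε := by rw [hεdef]; positivity
    set K : ℝ := 1 + (ε * Real.log 2)⁻¹ with hKdef
    have hK : (0:ℝ) < K := by
      have : (0:ℝ) < (ε * Real.log 2)⁻¹ := by positivity
      rw [hKdef]; linarith
    set C2 : ℝ := C^2 * K^(2*(p+1)) * (8 * ((s-2)⁻¹ * (4:ℝ)^(s-2))) with hC2def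
    have hC2 : (0:ℝ) < C2 := by
      rw [hC2def]
      have h4 : (0:ℝ) < (4:ℝ)^(s-2) := Real.rpow_pos_of_pos (by norm_num) _
      positivity
    refine ⟨Real.sqrt C2, Real.sqrt_pos.mpr hC2, ?_⟩
    intro R hR
    have hR0 : (0:ℝ) < R := by linarith
    have hlogR : Real.log 2 ≤ Real.log R := Real.log_le_log (by norm_num) hR
    have hlogR0 : (0:ℝ) ≤ Real.log R := by linarith
    obtain ⟨hsum_h, htsum_h⟩ := tail2D hs hR
    set A : ℝ := C^2 * K^(2*(p+1)) * Real.log R ^ (2*(p+1)) * R ^ (-(1/2 : ℝ)) with hAdef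
    have hA0 : (0:ℝ) ≤ A := by
      rw [hAdef]
      have : (0:ℝ) ≤ R ^ (-(1/2:ℝ)) := Real.rpow_nonneg hR0.le _
      positivity
    -- pointwise bound
    have hpt : ∀ ℓ : ℤ × ℤ,
        (if R < latNorm ℓ then
          (NN.sup' NN_nonempty fun ρ => |v (ℓ + ρ) - v ℓ|) ^ 2 else 0)
        ≤ A * (if R < latNorm ℓ then latNorm ℓ ^ (-s) else 0) := by
      intro ℓ
      by_cases hcon : R < latNorm ℓ
      · rw [if_pos hcon, if_pos hcon]
        set x : ℝ := latNorm ℓ with hxdef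
        have hx2 : (2:ℝ) ≤ x := by linarith
        have hx0 : (0:ℝ) < x := by linarith
        have hlogx0 : (0:ℝ) ≤ Real.log x := Real.log_nonneg (by linarith)
        have step1 : (NN.sup' NN_nonempty fun ρ => |v (ℓ + ρ) - v ℓ|) ^ 2
            ≤ (C * x ^ (-(1 : ℝ) - p) * Real.log x ^ (p + 1)) ^ 2 :=
          pow_le_pow_left₀ (hGnonneg ℓ) (hG ℓ hx2) 2
        refine le_trans step1 ?_
        have hxr0 : (0:ℝ) ≤ x ^ (-(1:ℝ) - p) := Real.rpow_nonneg hx0.le _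
        have hlogcomp := log_compare hR hcon hε
        -- expand the square
        have expand : (C * x ^ (-(1 : ℝ) - p) * Real.log x ^ (p + 1)) ^ 2
            = C^2 * (x ^ (-(1:ℝ) - p))^2 * Real.log x ^ (2*(p+1)) := by
          rw [mul_pow, mul_pow, ← pow_mul]
          ring_nf
        rw [expand]
        have step2 : Real.log x ^ (2*(p+1)) ≤ (K * Real.log R * (x/R) ^ ε) ^ (2*(p+1)) := by
          apply pow_le_pow_left₀ hlogx0
          rw [hKdef]
          exact hlogcomp
        have step3 : C^2 * (x ^ (-(1:ℝ) - p))^2 * Real.log x ^ (2*(p+1))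
            ≤ C^2 * (x ^ (-(1:ℝ) - p))^2 * (K * Real.log R * (x/R) ^ ε) ^ (2*(p+1)) := by
          apply mul_le_mul_of_nonneg_left step2
          positivity
        refine le_trans step3 (le_of_eq ?_)
        -- now an exact identity
        have hyn : (0:ℝ) ≤ x / R := by positivity
        have hε2 : ε * ((2*(p+1) : ℕ) : ℝ) = 1/2 := by
          rw [hεdef]
          push_cast
          have hpne : ((p:ℝ)+1) ≠ 0 := by positivity
          field_simp
          ring
        have hpow1 : ((x/R) ^ ε) ^ (2*(p+1)) = x ^ ((1:ℝ)/2) * R ^ (-(1/2:ℝ)) := by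
          rw [← Real.rpow_natCast ((x/R) ^ ε) (2*(p+1)), ← Real.rpow_mul hyn, hε2,
            Real.div_rpow hx0.le hR0.le, div_eq_mul_inv, ← Real.rpow_neg hR0.le]
        have hpow2 : (x ^ (-(1:ℝ) - p))^2 = x ^ ((-(1:ℝ) - p) * 2) := by
          rw [← Real.rpow_natCast (x ^ (-(1:ℝ) - p)) 2, ← Real.rpow_mul hx0.le]
          norm_num
        have hpow3 : x ^ ((-(1:ℝ) - p) * 2) * x ^ ((1:ℝ)/2) = x ^ (-s) := by
          rw [← Real.rpow_add hx0, hsdef]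
          congr 1
          ring
        rw [mul_pow, mul_pow, hpow1, hpow2, hAdef]
        calc C ^ 2 * x ^ ((-(1:ℝ) - ↑p) * 2) *
              (K ^ (2 * (p + 1)) * Real.log R ^ (2 * (p + 1)) * (x ^ ((1:ℝ)/2) * R ^ (-(1/2:ℝ))))
            = C ^ 2 * K ^ (2 * (p + 1)) * Real.log R ^ (2 * (p + 1)) * R ^ (-(1/2:ℝ)) *
              (x ^ ((-(1:ℝ) - ↑p) * 2) * x ^ ((1:ℝ)/2)) := by ring
          _ = C ^ 2 * K ^ (2 * (p + 1)) * Real.log R ^ (2 * (p + 1)) * R ^ (-(1/2:ℝ)) *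
              x ^ (-s) := by rw [hpow3]
      · rw [if_neg hcon, if_neg hcon, mul_zero]
    -- summability and sum bound
    have hsumAh : Summable (fun ℓ : ℤ × ℤ =>
        A * (if R < latNorm ℓ then latNorm ℓ ^ (-s) else 0)) := hsum_h.mul_left A
    have hsumf : Summable (fun ℓ : ℤ × ℤ => if R < latNorm ℓ then
        (NN.sup' NN_nonempty fun ρ => |v (ℓ + ρ) - v ℓ|) ^ 2 else 0) :=
      Summable.of_nonneg_of_le (hfnonneg R) hpt hsumAh
    have htsum : (∑' ℓ : ℤ × ℤ, if R < latNorm ℓ then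
        (NN.sup' NN_nonempty fun ρ => |v (ℓ + ρ) - v ℓ|) ^ 2 else 0)
        ≤ A * (8 * ((s - 2)⁻¹ * (R / 4) ^ (2 - s))) := by
      calc (∑' ℓ : ℤ × ℤ, if R < latNorm ℓ then
          (NN.sup' NN_nonempty fun ρ => |v (ℓ + ρ) - v ℓ|) ^ 2 else 0)
          ≤ ∑' ℓ : ℤ × ℤ, A * (if R < latNorm ℓ then latNorm ℓ ^ (-s) else 0) :=
            Summable.tsum_le_tsum hpt hsumf hsumAh
        _ = A * ∑' ℓ : ℤ × ℤ, (if R < latNorm ℓ then latNorm ℓ ^ (-s) else 0) := tsum_mul_left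
        _ ≤ A * (8 * ((s - 2)⁻¹ * (R / 4) ^ (2 - s))) :=
            mul_le_mul_of_nonneg_left htsum_h hA0
    -- identify the bound with the square of the target
    set B : ℝ := Real.sqrt C2 * R ^ (-(p : ℝ)) * Real.log R ^ (p + 1) with hBdef
    have hB0 : (0:ℝ) ≤ B := by
      rw [hBdef]
      have h1 : (0:ℝ) ≤ R ^ (-(p:ℝ)) := Real.rpow_nonneg hR0.le _
      have h2 := Real.sqrt_nonneg C2
      positivity
    have hident : A * (8 * ((s - 2)⁻¹ * (R / 4) ^ (2 - s))) = B ^ 2 := by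
      have hdiv : (R/4) ^ (2 - s) = R ^ (2-s) * (4:ℝ) ^ (s-2) := by
        rw [Real.div_rpow hR0.le (by norm_num : (0:ℝ) ≤ 4), div_eq_mul_inv,
          ← Real.rpow_neg (by norm_num : (0:ℝ) ≤ 4), neg_sub]
      have hRexp : R ^ (-(1/2:ℝ)) * R ^ (2 - s) = (R ^ (-(p:ℝ)))^2 := by
        rw [← Real.rpow_natCast (R ^ (-(p:ℝ))) 2, ← Real.rpow_mul hR0.le,
          ← Real.rpow_add hR0, hsdef]
        congr 1
        push_cast
        ring
      have hBsq : B ^ 2 = C2 * (R ^ (-(p:ℝ)))^2 * Real.log R ^ (2*(p+1)) := by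
        rw [hBdef, mul_pow, mul_pow, Real.sq_sqrt hC2.le, ← pow_mul]
        ring_nf
      rw [hBsq, hAdef, hC2def, hdiv]
      calc C ^ 2 * K ^ (2 * (p + 1)) * Real.log R ^ (2 * (p + 1)) * R ^ (-(1/2:ℝ)) *
            (8 * ((s - 2)⁻¹ * (R ^ (2 - s) * (4:ℝ) ^ (s - 2))))
          = C ^ 2 * K ^ (2 * (p + 1)) * (8 * ((s - 2)⁻¹ * (4:ℝ) ^ (s - 2))) *
            (R ^ (-(1/2:ℝ)) * R ^ (2 - s)) * Real.log R ^ (2 * (p + 1)) := by ring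
        _ = C ^ 2 * K ^ (2 * (p + 1)) * (8 * ((s - 2)⁻¹ * (4:ℝ) ^ (s - 2))) *
            (R ^ (-(p:ℝ)))^2 * Real.log R ^ (2 * (p + 1)) := by rw [hRexp]
    rw [hident] at htsum
    calc (∑' ℓ : ℤ × ℤ, if R < latNorm ℓ then
        (NN.sup' NN_nonempty fun ρ => |v (ℓ + ρ) - v ℓ|) ^ 2 else 0) ^ ((1:ℝ)/2)
        ≤ (B ^ 2) ^ ((1:ℝ)/2) :=
          Real.rpow_le_rpow (tsum_nonneg (hfnonneg R)) htsum (by norm_num)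
      _ = B := by
          rw [← Real.rpow_natCast B 2, ← Real.rpow_mul hB0]
          norm_num
end

section
/- Let u ∈ C²(ℝ² \ {0}; ℝ^N) satisfy |∇ u(x)| ≤ C|x|^{-1} and |∇² u(x)| ≤ C|x|^{-2} for |x| ≥ 1, and let ξ : ℝ² → ℝ² be a C² diffeomorphism (outside a compact set) with |ξ(x) - x| ≤ C, |∇ξ(x) - I| ≤ C|x|^{-1}, and |∇²ξ(x)| ≤ C|x|^{-2} for large |x|. Then the composition w := u ∘ ξ^{-1} satisfies |∇ w(x) - ∇ u(x)| ≤ C'|x|^{-2} for all sufficiently large |x|. -/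
open Set

lemma aux_preconn (R : ℝ) (hR : 0 < R) : IsPreconnected {z : Fin 2 → ℝ | R ≤ ‖z‖} := by
  have hrank : (1 : Cardinal) < Module.rank ℝ (Fin 2 → ℝ) := by
    rw [rank_fin_fun]; norm_num
  have hsph : IsPathConnected (Metric.sphere (0 : Fin 2 → ℝ) R) :=
    isPathConnected_sphere hrank 0 hR.le
  have hprod : IsPreconnected ((Metric.sphere (0 : Fin 2 → ℝ) R) ×ˢ (Ici (1:ℝ))) :=
    hsph.isConnected.isPreconnected.prod isPreconnected_Ici
  have hcont : Continuous (fun p : (Fin 2 → ℝ) × ℝ => p.2 • p.1) :=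
    continuous_snd.smul continuous_fst
  have himg : (fun p : (Fin 2 → ℝ) × ℝ => p.2 • p.1) ''
      ((Metric.sphere (0 : Fin 2 → ℝ) R) ×ˢ (Ici (1:ℝ))) = {z : Fin 2 → ℝ | R ≤ ‖z‖} := by
    ext z
    constructor
    · rintro ⟨⟨s, t⟩, ⟨hs, ht⟩, rfl⟩
      have hs' : ‖s‖ = R := by simpa using hs
      have ht' : (1:ℝ) ≤ t := ht
      simp only [mem_setOf_eq, norm_smul, hs', Real.norm_eq_abs,
        abs_of_nonneg (le_trans zero_le_one ht')]
      nlinarith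
    · intro hz
      have hz' : R ≤ ‖z‖ := hz
      have hzpos : 0 < ‖z‖ := lt_of_lt_of_le hR hz'
      refine ⟨⟨(R / ‖z‖) • z, ‖z‖ / R⟩, ⟨?_, ?_⟩, ?_⟩
      · simp only [Metric.mem_sphere, dist_zero_right, norm_smul, Real.norm_eq_abs]
        rw [abs_of_nonneg (by positivity)]
        field_simp
      · exact (one_le_div hR).mpr hz'
      · simp only [smul_smul]
        rw [div_mul_div_comm, mul_comm, div_self (by positivity), one_smul]
  rw [← himg]
  exact hprod.image _ hcont.continuousOn

set_option maxHeartbeats 1000000 in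
/-- If u has gradients decaying like |x|^{-1}, |x|^{-2}, and ξ is a C²
diffeomorphism (outside a compact set) that is an O(1) perturbation of the identity with
|∇ξ - I| ≤ C|x|^{-1} and |∇²ξ| ≤ C|x|^{-2}, then w = u ∘ ξ⁻¹ satisfies
|∇w(x) - ∇u(x)| ≤ C'|x|^{-2} for all sufficiently large |x|. -/
theorem stmt_6 (N : ℕ)
    (u : (Fin 2 → ℝ) → (Fin N → ℝ)) (ξ ξinv : (Fin 2 → ℝ) → (Fin 2 → ℝ))
    (C : ℝ) (hC : 0 < C)
    (hu : ContDiffOn ℝ 2 u {x | x ≠ 0})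
    (hu1 : ∀ x : Fin 2 → ℝ, 1 ≤ ‖x‖ → ‖fderiv ℝ u x‖ ≤ C / ‖x‖)
    (hu2 : ∀ x : Fin 2 → ℝ, 1 ≤ ‖x‖ → ‖fderiv ℝ (fderiv ℝ u) x‖ ≤ C / ‖x‖ ^ 2)
    (hleft : Function.LeftInverse ξinv ξ) (hright : Function.RightInverse ξinv ξ)
    (hξ : ContDiffOn ℝ 2 ξ {x | 1 ≤ ‖x‖}) (hξinv : ContDiffOn ℝ 2 ξinv {x | 1 ≤ ‖x‖})
    (hξ0 : ∀ x : Fin 2 → ℝ, 1 ≤ ‖x‖ → ‖ξ x - x‖ ≤ C)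
    (hξ1 : ∀ x : Fin 2 → ℝ, 1 ≤ ‖x‖ →
      ‖fderiv ℝ ξ x - ContinuousLinearMap.id ℝ (Fin 2 → ℝ)‖ ≤ C / ‖x‖)
    (hξ2 : ∀ x : Fin 2 → ℝ, 1 ≤ ‖x‖ → ‖fderiv ℝ (fderiv ℝ ξ) x‖ ≤ C / ‖x‖ ^ 2) :
    ∃ C' > 0, ∃ R0 : ℝ, ∀ x : Fin 2 → ℝ, R0 ≤ ‖x‖ →
      ‖fderiv ℝ (u ∘ ξinv) x - fderiv ℝ u x‖ ≤ C' / ‖x‖ ^ 2 := by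
  -- basic openness facts
  have hopen : IsOpen {z : Fin 2 → ℝ | 1 < ‖z‖} := by
    have : Continuous fun z : Fin 2 → ℝ => ‖z‖ := continuous_norm
    exact isOpen_lt continuous_const this
  have hopen0 : IsOpen {z : Fin 2 → ℝ | z ≠ 0} := isOpen_compl_singleton
  -- differentiability of ξinv at points of norm > 1
  have hξinv_diff : ∀ z : Fin 2 → ℝ, 1 < ‖z‖ → DifferentiableAt ℝ ξinv z := by
    intro z hz
    have hmem : {x : Fin 2 → ℝ | 1 ≤ ‖x‖} ∈ nhds z :=
      Filter.mem_of_superset (hopen.mem_nhds hz) (fun w hw => le_of_lt (show (1:ℝ) < ‖w‖ from hw))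
    exact ((hξinv.contDiffAt hmem).differentiableAt (by norm_num))
  have hξ_diff : ∀ z : Fin 2 → ℝ, 1 < ‖z‖ → DifferentiableAt ℝ ξ z := by
    intro z hz
    have hmem : {x : Fin 2 → ℝ | 1 ≤ ‖x‖} ∈ nhds z :=
      Filter.mem_of_superset (hopen.mem_nhds hz) (fun w hw => le_of_lt (show (1:ℝ) < ‖w‖ from hw))
    exact ((hξ.contDiffAt hmem).differentiableAt (by norm_num))
  have hu_diff : ∀ z : Fin 2 → ℝ, z ≠ 0 → DifferentiableAt ℝ u z := by
    intro z hz
    exact ((hu.contDiffAt (hopen0.mem_nhds hz)).differentiableAt (by norm_num))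
  have hDu_diff : ∀ z : Fin 2 → ℝ, z ≠ 0 → DifferentiableAt ℝ (fderiv ℝ u) z := by
    intro z hz
    have h2 : ContDiffAt ℝ 2 u z := hu.contDiffAt (hopen0.mem_nhds hz)
    have := h2.fderiv_right (m := 1) (by norm_num)
    exact this.differentiableAt (by norm_num)
  -- key: ξinv maps far points to far points
  have hkey : ∀ z : Fin 2 → ℝ, C + 2 ≤ ‖z‖ → 1 ≤ ‖ξinv z‖ := by
    intro z hz
    by_contra hlt
    push_neg at hlt
    set S : Set (Fin 2 → ℝ) := {w | C + 2 ≤ ‖w‖} with hS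
    have hpre : IsPreconnected S := aux_preconn (C + 2) (by linarith)
    have hcont : ContinuousOn (fun w => ‖ξinv w‖) S := by
      have h1 : ContinuousOn ξinv S := by
        refine (hξinv.continuousOn).mono ?_
        intro w hw
        have hw' : C + 2 ≤ ‖w‖ := hw
        show (1:ℝ) ≤ ‖w‖
        linarith
      exact h1.norm
    -- a point of S where ‖ξinv‖ is large
    obtain ⟨y0, hy0⟩ : ∃ y0 : Fin 2 → ℝ, ‖y0‖ = 2*C + 2 :=
      ⟨(fun _ => 2*C + 2), by
        rw [pi_norm_const, Real.norm_eq_abs, abs_of_nonneg (by linarith : (0:ℝ) ≤ 2*C+2)]⟩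
    have hy0' : 1 ≤ ‖y0‖ := by rw [hy0]; linarith
    have hb : ξ y0 ∈ S := by
      have := hξ0 y0 hy0'
      have : ‖y0‖ - ‖ξ y0‖ ≤ C := by
        calc ‖y0‖ - ‖ξ y0‖ ≤ ‖ξ y0 - y0‖ := by
              have := norm_sub_norm_le (ξ y0) y0
              have := norm_sub_norm_le y0 (ξ y0)
              rw [norm_sub_rev] at this
              linarith [abs_norm_sub_norm_le (ξ y0) y0]
        _ ≤ C := hξ0 y0 hy0'
      simp only [hS, mem_setOf_eq]
      rw [hy0] at this; linarith
    have hbv : ‖ξinv (ξ y0)‖ = 2*C + 2 := by rw [hleft y0, hy0]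
    have ha : z ∈ S := hz
    -- intermediate value: some point has ‖ξinv‖ = 3/2
    have hmid : (3/2 : ℝ) ∈ Icc ((fun w => ‖ξinv w‖) z) ((fun w => ‖ξinv w‖) (ξ y0)) := by
      show (3/2 : ℝ) ∈ Icc ‖ξinv z‖ ‖ξinv (ξ y0)‖
      rw [hbv]
      constructor
      · linarith
      · linarith
    have := hpre.intermediate_value ha hb hcont hmid
    obtain ⟨w, hwS, hw⟩ := this
    have hw' : ‖ξinv w‖ = 3/2 := hw
    -- but any point with ‖ξinv w‖ ≥ 1 in S has ‖ξinv w‖ ≥ 2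
    have h1w : 1 ≤ ‖ξinv w‖ := by rw [hw']; norm_num
    have hle : ‖w - ξinv w‖ ≤ C := by
      have := hξ0 (ξinv w) h1w
      rwa [hright w] at this
    have : ‖w‖ - ‖ξinv w‖ ≤ C := by
      calc ‖w‖ - ‖ξinv w‖ ≤ ‖w - ξinv w‖ := by
            linarith [abs_norm_sub_norm_le w (ξinv w), le_abs_self (‖w‖ - ‖ξinv w‖)]
      _ ≤ C := hle
    have hwS' : C + 2 ≤ ‖w‖ := hwS
    rw [hw'] at this
    linarith
  refine ⟨5 * C^2, by positivity, 4*C + 4, ?_⟩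
  intro x hx
  have hx1 : 1 < ‖x‖ := by linarith
  have hxpos : (0:ℝ) < ‖x‖ := by linarith
  set y := ξinv x with hy
  have hy1 : 1 ≤ ‖y‖ := hkey x (by linarith)
  have hxy : ‖x - y‖ ≤ C := by
    have := hξ0 y hy1
    rwa [hright x] at this
  have hylb : ‖x‖ - C ≤ ‖y‖ := by
    calc ‖x‖ - C ≤ ‖x‖ - ‖x - y‖ := by linarith
    _ ≤ ‖y‖ := by
        have := norm_sub_norm_le x y
        linarith [abs_norm_sub_norm_le x y, le_abs_self (‖x‖ - ‖y‖)]
  have hCx : C ≤ ‖x‖/4 - 1 := by linarith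
  have hy34 : 3/4 * ‖x‖ ≤ ‖y‖ := by linarith
  have hy1' : 1 < ‖y‖ := by nlinarith
  have hyne : y ≠ 0 := by
    intro h; rw [h] at hy1'; simp at hy1'; linarith
  have hxne : x ≠ 0 := by
    intro h; rw [h] at hx1; simp at hx1; linarith
  -- chain rule
  have hchain : fderiv ℝ (u ∘ ξinv) x = (fderiv ℝ u y).comp (fderiv ℝ ξinv x) :=
    fderiv_comp x (hu_diff y hyne) (hξinv_diff x hx1)
  -- derivative of ξ ∘ ξinv = id
  have hinvchain : (fderiv ℝ ξ y).comp (fderiv ℝ ξinv x) = ContinuousLinearMap.id ℝ (Fin 2 → ℝ) := by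
    have h1 : fderiv ℝ (ξ ∘ ξinv) x = (fderiv ℝ ξ y).comp (fderiv ℝ ξinv x) :=
      fderiv_comp x (hξ_diff y hy1') (hξinv_diff x hx1)
    have h2 : (ξ ∘ ξinv) = id := funext fun z => hright z
    rw [h2] at h1
    rw [← h1, fderiv_id]
  set A := fderiv ℝ ξinv x with hA
  set E := A - ContinuousLinearMap.id ℝ (Fin 2 → ℝ) with hE
  have hErw : (ContinuousLinearMap.id ℝ (Fin 2 → ℝ) - fderiv ℝ ξ y).comp A = E := by
    rw [ContinuousLinearMap.sub_comp, ContinuousLinearMap.id_comp, hinvchain, hE]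
  have hEbound : ‖E‖ ≤ 2 * C / ‖x‖ := by
    have hnormA : ‖A‖ ≤ ‖E‖ + 1 := by
      have : A = E + ContinuousLinearMap.id ℝ (Fin 2 → ℝ) := by rw [hE]; abel
      rw [this]
      refine le_trans (norm_add_le _ _) ?_
      have : ‖ContinuousLinearMap.id ℝ (Fin 2 → ℝ)‖ ≤ 1 := ContinuousLinearMap.norm_id_le
      linarith
    have h1 : ‖E‖ ≤ (C / ‖y‖) * (‖E‖ + 1) := by
      calc ‖E‖ = ‖(ContinuousLinearMap.id ℝ (Fin 2 → ℝ) - fderiv ℝ ξ y).comp A‖ := by rw [hErw]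
      _ ≤ ‖ContinuousLinearMap.id ℝ (Fin 2 → ℝ) - fderiv ℝ ξ y‖ * ‖A‖ :=
          ContinuousLinearMap.opNorm_comp_le _ _
      _ ≤ (C / ‖y‖) * (‖E‖ + 1) := by
          have hb := hξ1 y hy1
          rw [norm_sub_rev] at hb
          have h0 : (0:ℝ) ≤ ‖E‖ + 1 := by positivity
          have h0' : (0:ℝ) ≤ ‖A‖ := norm_nonneg _
          exact mul_le_mul hb hnormA h0' (by positivity)
    have hCy : C / ‖y‖ ≤ 1/3 := by
      rw [div_le_iff₀ (by linarith : (0:ℝ) < ‖y‖)]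
      nlinarith
    have h2 : ‖E‖ * (1 - C/‖y‖) ≤ C/‖y‖ := by nlinarith [norm_nonneg E]
    have h3 : ‖E‖ ≤ (3/2) * (C/‖y‖) := by nlinarith [norm_nonneg E]
    have h4 : C / ‖y‖ ≤ C / (3/4 * ‖x‖) := by
      apply div_le_div_of_nonneg_left hC.le (by linarith) hy34
    calc ‖E‖ ≤ (3/2) * (C/‖y‖) := h3
    _ ≤ (3/2) * (C / (3/4 * ‖x‖)) := by linarith
    _ = 2 * C / ‖x‖ := by field_simp; ring
  -- bound on ‖Du y‖
  have hDuy : ‖fderiv ℝ u y‖ ≤ (4/3) * C / ‖x‖ := by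
    calc ‖fderiv ℝ u y‖ ≤ C / ‖y‖ := hu1 y hy1
    _ ≤ C / (3/4 * ‖x‖) := div_le_div_of_nonneg_left hC.le (by linarith) hy34
    _ = (4/3) * C / ‖x‖ := by field_simp
  -- mean value: ‖Du y - Du x‖
  have hMVT : ‖fderiv ℝ u y - fderiv ℝ u x‖ ≤ 2 * C^2 / ‖x‖^2 := by
    set s := Metric.closedBall x C with hs
    have hzs : ∀ z ∈ s, 3/4 * ‖x‖ ≤ ‖z‖ := by
      intro z hz
      have : ‖z - x‖ ≤ C := by
        rw [hs, Metric.mem_closedBall, dist_eq_norm] at hz; exact hz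
      have h1 : ‖x‖ - ‖z‖ ≤ ‖x - z‖ := by
        linarith [abs_norm_sub_norm_le x z, le_abs_self (‖x‖ - ‖z‖)]
      rw [norm_sub_rev] at this
      linarith
    have hzsne : ∀ z ∈ s, z ≠ 0 := by
      intro z hz h0
      have := hzs z hz
      rw [h0] at this; simp at this; nlinarith
    have hdiff : ∀ z ∈ s, DifferentiableAt ℝ (fderiv ℝ u) z :=
      fun z hz => hDu_diff z (hzsne z hz)
    have hbnd : ∀ z ∈ s, ‖fderiv ℝ (fderiv ℝ u) z‖ ≤ 2 * C / ‖x‖^2 := by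
      intro z hz
      have h34 := hzs z hz
      have h1z : 1 ≤ ‖z‖ := by nlinarith
      calc ‖fderiv ℝ (fderiv ℝ u) z‖ ≤ C / ‖z‖^2 := hu2 z h1z
      _ ≤ C / (3/4*‖x‖)^2 := by
          apply div_le_div_of_nonneg_left hC.le (by positivity) ?_
          nlinarith
      _ ≤ 2 * C / ‖x‖^2 := by
          rw [div_le_div_iff₀ (by positivity) (by positivity)]
          nlinarith
    have hconv : Convex ℝ s := convex_closedBall x C
    have hxs : x ∈ s := Metric.mem_closedBall_self hC.le
    have hys : y ∈ s := by
      rw [hs, Metric.mem_closedBall, dist_eq_norm, norm_sub_rev]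
      exact hxy
    have := hconv.norm_image_sub_le_of_norm_fderiv_le hdiff hbnd hxs hys
    calc ‖fderiv ℝ u y - fderiv ℝ u x‖ ≤ 2 * C / ‖x‖^2 * ‖y - x‖ := this
    _ ≤ 2 * C / ‖x‖^2 * C := by
        have : ‖y - x‖ ≤ C := by rw [norm_sub_rev]; exact hxy
        have h0 : (0:ℝ) ≤ 2 * C / ‖x‖^2 := by positivity
        nlinarith
    _ = 2 * C^2 / ‖x‖^2 := by ring
  -- put it together
  have hsplit : fderiv ℝ (u ∘ ξinv) x - fderiv ℝ u x
      = (fderiv ℝ u y).comp E + (fderiv ℝ u y - fderiv ℝ u x) := by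
    rw [hchain, hE, ContinuousLinearMap.comp_sub, ContinuousLinearMap.comp_id]
    abel
  calc ‖fderiv ℝ (u ∘ ξinv) x - fderiv ℝ u x‖
      = ‖(fderiv ℝ u y).comp E + (fderiv ℝ u y - fderiv ℝ u x)‖ := by rw [hsplit]
    _ ≤ ‖(fderiv ℝ u y).comp E‖ + ‖fderiv ℝ u y - fderiv ℝ u x‖ := norm_add_le _ _
    _ ≤ ‖fderiv ℝ u y‖ * ‖E‖ + 2 * C^2 / ‖x‖^2 := by
        have := ContinuousLinearMap.opNorm_comp_le (fderiv ℝ u y) E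
        linarith
    _ ≤ ((4/3) * C / ‖x‖) * (2 * C / ‖x‖) + 2 * C^2 / ‖x‖^2 := by
        have h0 : (0:ℝ) ≤ ‖E‖ := norm_nonneg _
        have h1 : (0:ℝ) ≤ ‖fderiv ℝ u y‖ := norm_nonneg _
        have := mul_le_mul hDuy hEbound h0 (by positivity)
        linarith
    _ ≤ 5 * C^2 / ‖x‖^2 := by
        have e : ((4/3) * C / ‖x‖) * (2 * C / ‖x‖) + 2 * C^2 / ‖x‖^2
            = ((8/3)*C^2 + 2*C^2) / ‖x‖^2 := by
          field_simp; ring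
        rw [e]
        gcongr
        nlinarith
end
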